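/- Consider a partial PJR-Exact run of length r of an approval-based multi-winner election (distinct candidates w_1,…,w_r and fraction functions f^0,…,f^r satisfying the PJR-Exact conditions for iterations 1,…,r) whose r iterations are all normal, and suppose that either r = k, or r < k and every candidate c ∈ C \ W_r satisfies Σ_{i : c ∈ A_i} f^r_i < q. Then every committee W ⊆ C with W_r ⊆ W and |W| = k provides extended justified representation (EJR). In particular, all voting rules in the EJR-Exact family satisfy EJR. -/

import Mathlib

open Finset

variable {C : Type*} [Fintype C] [DecidableEq C]

/-- The voters approving candidate `c`. -/
def approvers {n : ℕ} (A : Fin n → Finset C) (c : C) : Finset (Fin n) :=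
  Finset.univ.filter (fun i => c ∈ A i)

/-- The exact quota `q = n / k`. -/
def quota (n k : ℕ) : ℚ := (n : ℚ) / (k : ℚ)

/-- Remaining support of candidate `c` under vote fractions `f`. -/
def supp {n : ℕ} (A : Fin n → Finset C) (f : Fin n → ℚ) (c : C) : ℚ :=
  ∑ i ∈ approvers A c, f i

/-- The set `W_j = {w_1, …, w_j}` of the first `j` winners. -/
def Wset (w : ℕ → C) (j : ℕ) : Finset C := (Finset.Icc 1 j).image w

/-- The candidates approved by every voter in `Ns`, i.e. `⋂_{i ∈ Ns} A i`. -/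
def commonApproved {n : ℕ} (A : Fin n → Finset C) (Ns : Finset (Fin n)) : Finset C :=
  Finset.univ.filter (fun c => ∀ i ∈ Ns, c ∈ A i)

/-- `Ns` is an `ℓ`-cohesive group of voters: `|Ns| ≥ ℓ·n/k` and `|⋂_{i ∈ Ns} A i| ≥ ℓ`. -/
def Cohesive {n : ℕ} (A : Fin n → Finset C) (k ℓ : ℕ) (Ns : Finset (Fin n)) : Prop :=
  (ℓ : ℚ) * (n : ℚ) / (k : ℚ) ≤ (Ns.card : ℚ) ∧ ℓ ≤ (commonApproved A Ns).card

/-- `W` provides proportional justified representation for `(A, k)`. -/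
def ProvidesPJR {n : ℕ} (A : Fin n → Finset C) (k : ℕ) (W : Finset C) : Prop :=
  ∀ ℓ : ℕ, 1 ≤ ℓ → ℓ ≤ k → ∀ Ns : Finset (Fin n), Cohesive A k ℓ Ns →
    ℓ ≤ (W ∩ Ns.biUnion A).card

/-- `W` provides extended justified representation for `(A, k)`. -/
def ProvidesEJR {n : ℕ} (A : Fin n → Finset C) (k : ℕ) (W : Finset C) : Prop :=
  ∀ ℓ : ℕ, 1 ≤ ℓ → ℓ ≤ k → ∀ Ns : Finset (Fin n), Cohesive A k ℓ Ns →
    ∃ i ∈ Ns, ℓ ≤ (A i ∩ W).card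

/-- The set of `ℓ`'s satisfying the dissatisfaction-level fixpoint equation
`ℓ = ⌊(k/n)·|{i : c ∈ A_i ∧ |A_i ∩ W| < ℓ}|⌋`
(natural-number division `k * m / n` is exactly the floor `⌊(k/n)·m⌋`). -/
def dissatSet {n : ℕ} (A : Fin n → Finset C) (k : ℕ) (W : Finset C) (c : C) : Set ℕ :=
  {ℓ : ℕ | ℓ = k * (Finset.univ.filter (fun i => c ∈ A i ∧ (A i ∩ W).card < ℓ)).card / n}

/-- The dissatisfaction level `ℓ(c, W)`: the largest non-negative integer satisfying
the fixpoint equation. -/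
noncomputable def dissat {n : ℕ} (A : Fin n → Finset C) (k : ℕ) (W : Finset C) (c : C) : ℕ :=
  sSup (dissatSet A k W c)

/-- `ℓ_W(i, c) = max_{c' ∈ A_i \ (W ∪ {c})} ℓ(c', W)` (with `max ∅ = 0`). -/
noncomputable def dissatVoter {n : ℕ} (A : Fin n → Finset C) (k : ℕ) (W : Finset C)
    (i : Fin n) (c : C) : ℕ :=
  (A i \ insert c W).sup (dissat A k W)

/-- `ℓ_W(i) = max_{c ∈ A_i \ W} ℓ(c, W)` (with `max ∅ = 0`). -/
noncomputable def dissatVoterAll {n : ℕ} (A : Fin n → Finset C) (k : ℕ) (W : Finset C)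
    (i : Fin n) : ℕ :=
  (A i \ W).sup (dissat A k W)

/-- `g_i(c)` relative to the committee `W`. -/
noncomputable def gfun {n : ℕ} (A : Fin n → Finset C) (k : ℕ) (W : Finset C)
    (i : Fin n) (c : C) : ℚ :=
  if dissatVoter A k W i c ≤ (A i ∩ W).card then 0
  else ((dissatVoter A k W i c : ℚ) - ((A i ∩ W).card : ℚ) - 1) / (dissatVoter A k W i c : ℚ)

/-- Candidate `c ∉ W` is in a normal state (w.r.t. committee `W` and fractions `f`). -/
def NormalState {n : ℕ} (A : Fin n → Finset C) (k : ℕ) (f : Fin n → ℚ) (W : Finset C)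
    (c : C) : Prop :=
  (∀ i : Fin n, c ∈ A i → (A i ∩ W).card < dissatVoter A k W i c →
      ((dissatVoter A k W i c : ℚ) - ((A i ∩ W).card : ℚ)) / (dissatVoter A k W i c : ℚ) ≤ f i) ∧
  quota n k ≤ ∑ i ∈ approvers A c, (f i - gfun A k W i c)

/-- Candidate `c ∉ W` is in a starving state. -/
def StarvingState {n : ℕ} (A : Fin n → Finset C) (k : ℕ) (f : Fin n → ℚ) (W : Finset C)
    (c : C) : Prop :=
  ∃ i : Fin n, c ∈ A i ∧ (A i ∩ W).card < dissatVoter A k W i c ∧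
    f i < ((dissatVoter A k W i c : ℚ) - ((A i ∩ W).card : ℚ)) / (dissatVoter A k W i c : ℚ)

/-- Candidate `c ∉ W` is in an eager state. -/
def EagerState {n : ℕ} (A : Fin n → Finset C) (k : ℕ) (f : Fin n → ℚ) (W : Finset C)
    (c : C) : Prop :=
  ¬ StarvingState A k f W c ∧ quota n k ≤ supp A f c ∧
    ∑ i ∈ approvers A c, (f i - gfun A k W i c) < quota n k

/-- A run of a voting rule in the PJR-Exact family: a sequence of distinct winners
`w 1, …, w k` together with fraction functions `f 0, …, f k` satisfying the three
defining conditions of the family. -/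
structure PJRExactRun (n k : ℕ) (A : Fin n → Finset C) where
  w : ℕ → C
  f : ℕ → Fin n → ℚ
  /-- the selected candidates are pairwise distinct -/
  w_inj : ∀ j j' : ℕ, 1 ≤ j → j ≤ k → 1 ≤ j' → j' ≤ k → w j = w j' → j = j'
  /-- initially each voter has her whole vote -/
  f_zero : ∀ i, f 0 i = 1
  /-- fractions stay non-negative -/
  f_nonneg : ∀ j, 1 ≤ j → j ≤ k → ∀ i, 0 ≤ f j i
  /-- fractions never increase -/
  f_mono : ∀ j, 1 ≤ j → j ≤ k → ∀ i, f j i ≤ f (j - 1) i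
  /-- if the remaining support of the winner exceeds the quota, exactly `q` votes are removed -/
  remove_big : ∀ j, 1 ≤ j → j ≤ k → quota n k < supp A (f (j - 1)) (w j) →
    ∑ i ∈ approvers A (w j), (f (j - 1) i - f j i) = quota n k
  /-- if the remaining support of the winner is at most the quota, all of it is removed -/
  remove_small : ∀ j, 1 ≤ j → j ≤ k → supp A (f (j - 1)) (w j) ≤ quota n k →
    ∀ i, w j ∈ A i → f j i = 0
  /-- voters not approving the winner keep their fractions -/
  f_untouched : ∀ j, 1 ≤ j → j ≤ k → ∀ i, w j ∉ A i → f j i = f (j - 1) i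
  /-- if some unelected candidate has remaining support at least `q`,
  then so has the selected one -/
  greedy : ∀ j, 1 ≤ j → j ≤ k →
    (∃ c, c ∉ Wset w (j - 1) ∧ quota n k ≤ supp A (f (j - 1)) c) →
    quota n k ≤ supp A (f (j - 1)) (w j)

/-- Iteration `j` of a PJR-Exact run is normal. -/
def NormalIteration {n k : ℕ} {A : Fin n → Finset C} (R : PJRExactRun n k A) (j : ℕ) : Prop :=
  NormalState A k (R.f (j - 1)) (Wset R.w (j - 1)) (R.w j) ∧
  ∀ i : Fin n, R.w j ∈ A i →
    (A i ∩ Wset R.w (j - 1)).card < dissatVoter A k (Wset R.w (j - 1)) i (R.w j) →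
    ((dissatVoter A k (Wset R.w (j - 1)) i (R.w j) : ℚ) - ((A i ∩ Wset R.w j).card : ℚ)) /
      (dissatVoter A k (Wset R.w (j - 1)) i (R.w j) : ℚ) ≤ R.f j i

/-- A partial PJR-Exact run of length `r`: distinct winners `w 1, …, w r` and fraction
functions `f 0, …, f r` satisfying the PJR-Exact conditions for iterations `1, …, r`. -/
structure PJRExactPartialRun (n k r : ℕ) (A : Fin n → Finset C) where
  w : ℕ → C
  f : ℕ → Fin n → ℚ
  w_inj : ∀ j j' : ℕ, 1 ≤ j → j ≤ r → 1 ≤ j' → j' ≤ r → w j = w j' → j = j'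
  f_zero : ∀ i, f 0 i = 1
  f_nonneg : ∀ j, 1 ≤ j → j ≤ r → ∀ i, 0 ≤ f j i
  f_mono : ∀ j, 1 ≤ j → j ≤ r → ∀ i, f j i ≤ f (j - 1) i
  remove_big : ∀ j, 1 ≤ j → j ≤ r → quota n k < supp A (f (j - 1)) (w j) →
    ∑ i ∈ approvers A (w j), (f (j - 1) i - f j i) = quota n k
  remove_small : ∀ j, 1 ≤ j → j ≤ r → supp A (f (j - 1)) (w j) ≤ quota n k →
    ∀ i, w j ∈ A i → f j i = 0
  f_untouched : ∀ j, 1 ≤ j → j ≤ r → ∀ i, w j ∉ A i → f j i = f (j - 1) i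
  greedy : ∀ j, 1 ≤ j → j ≤ r →
    (∃ c, c ∉ Wset w (j - 1) ∧ quota n k ≤ supp A (f (j - 1)) c) →
    quota n k ≤ supp A (f (j - 1)) (w j)

/-- Iteration `j` of a partial PJR-Exact run is normal. -/
def NormalIterationP {n k r : ℕ} {A : Fin n → Finset C} (R : PJRExactPartialRun n k r A)
    (j : ℕ) : Prop :=
  NormalState A k (R.f (j - 1)) (Wset R.w (j - 1)) (R.w j) ∧
  ∀ i : Fin n, R.w j ∈ A i →
    (A i ∩ Wset R.w (j - 1)).card < dissatVoter A k (Wset R.w (j - 1)) i (R.w j) →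
    ((dissatVoter A k (Wset R.w (j - 1)) i (R.w j) : ℚ) - ((A i ∩ Wset R.w j).card : ℚ)) /
      (dissatVoter A k (Wset R.w (j - 1)) i (R.w j) : ℚ) ≤ R.f j i


/-!
Suppose an `ℓ`-cohesive group `N*` is under-represented by `W`, and let `c ∉ W` be approved by
all of `N*`. At every stage `j ≤ r` the group `N*` certifies `ℓ(c, W_j) ≥ ℓ`, and the second
clause of normality maintains the invariant that a voter with `|A_i ∩ W_j| < ℓ_j(i)` retains
at least `(ℓ_j(i) - |A_i ∩ W_j|) / ℓ_j(i) ≥ 1/ℓ` of her vote. Hence `c` keeps support at least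
`|N*| / ℓ ≥ q` throughout. If `r < k` this contradicts the stopping condition. If `r = k`,
greediness makes every iteration remove exactly `q`, so the total mass `n = k q` is exhausted,
contradicting the support `≥ q > 0` of `c`.
-/

-- Knaster–Tarski: the largest post-fixed point below `b` is a fixed point.
theorem Nat.exists_isFixedPt_ge_of_le_apply {h : ℕ → ℕ} (hmono : Monotone h) {b : ℕ}
    (hb : ∀ x, h x ≤ b) {ℓ₀ : ℕ} (h₀ : ℓ₀ ≤ h ℓ₀) : ∃ ℓ, ℓ₀ ≤ ℓ ∧ Function.IsFixedPt h ℓ := by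
  classical
  have hℓ₀b : ℓ₀ ≤ b := h₀.trans (hb ℓ₀)
  set m := Nat.findGreatest (fun x => x ≤ h x) b
  have hm : m ≤ h m := Nat.findGreatest_spec (P := fun x => x ≤ h x) hℓ₀b h₀
  exact ⟨m, Nat.le_findGreatest hℓ₀b h₀, le_antisymm (Nat.le_findGreatest (hb m) (hmono hm)) hm⟩

section DissatisfactionLevel

variable {C : Type*} [DecidableEq C] {n : ℕ} (A : Fin n → Finset C) (k : ℕ)

def dissatMap (W : Finset C) (c : C) (ℓ : ℕ) : ℕ :=
  k * #{i | c ∈ A i ∧ #(A i ∩ W) < ℓ} / n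

theorem mem_dissatSet {W : Finset C} {c : C} {ℓ : ℕ} :
    ℓ ∈ dissatSet A k W c ↔ Function.IsFixedPt (dissatMap A k W c) ℓ :=
  eq_comm

theorem dissatMap_mono (W : Finset C) (c : C) : Monotone (dissatMap A k W c) :=
  fun _ _ hxy => Nat.div_le_div_right <| Nat.mul_le_mul_left _ <| card_le_card <|
    monotone_filter_right _ fun _ _ hi => ⟨hi.1, hi.2.trans_le hxy⟩

theorem dissatMap_le (W : Finset C) (c : C) (ℓ : ℕ) : dissatMap A k W c ℓ ≤ k * n :=
  (Nat.div_le_self _ _).trans <| Nat.mul_le_mul_left _ <|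
    (card_filter_le _ _).trans_eq (card_fin n)

theorem dissatMap_le_of_subset {W W' : Finset C} (hW : W ⊆ W') (c : C) (ℓ : ℕ) :
    dissatMap A k W' c ℓ ≤ dissatMap A k W c ℓ :=
  Nat.div_le_div_right <| Nat.mul_le_mul_left _ <| card_le_card <|
    monotone_filter_right _ fun _ _ hi =>
      ⟨hi.1, (card_le_card (inter_subset_inter_left hW)).trans_lt hi.2⟩

theorem dissatSet_bddAbove (W : Finset C) (c : C) : BddAbove (dissatSet A k W c) :=
  ⟨k * n, fun ℓ hℓ => ((mem_dissatSet A k).1 hℓ).symm.trans_le (dissatMap_le A k W c ℓ)⟩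

theorem dissat_mem_dissatSet (W : Finset C) (c : C) : dissat A k W c ∈ dissatSet A k W c :=
  Nat.sSup_mem ⟨0, by simp [mem_dissatSet, dissatMap, Function.IsFixedPt]⟩
    (dissatSet_bddAbove A k W c)

theorem le_dissat_of_le_dissatMap {W : Finset C} {c : C} {ℓ : ℕ}
    (hℓ : ℓ ≤ dissatMap A k W c ℓ) : ℓ ≤ dissat A k W c := by
  obtain ⟨m, hℓm, hm⟩ :=
    Nat.exists_isFixedPt_ge_of_le_apply (dissatMap_mono A k W c) (dissatMap_le A k W c) hℓ
  exact hℓm.trans (le_csSup (dissatSet_bddAbove A k W c) ((mem_dissatSet A k).2 hm))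

theorem dissat_le_of_subset {W W' : Finset C} (hW : W ⊆ W') (c : C) :
    dissat A k W' c ≤ dissat A k W c := by
  have hfix := (mem_dissatSet A k).1 (dissat_mem_dissatSet A k W' c)
  exact le_dissat_of_le_dissatMap A k (hfix.symm.trans_le (dissatMap_le_of_subset A k hW c _))

theorem dissatVoterAll_le_of_subset {W W' : Finset C} (hW : W ⊆ W') (i : Fin n) :
    dissatVoterAll A k W' i ≤ dissatVoterAll A k W i :=
  Finset.sup_le fun c hc => (dissat_le_of_subset A k hW c).trans <|
    le_sup (sdiff_subset_sdiff Subset.rfl hW hc)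

theorem dissatVoterAll_insert_le (W : Finset C) (i : Fin n) (c : C) :
    dissatVoterAll A k (insert c W) i ≤ dissatVoter A k W i c :=
  sup_mono_fun fun c' _ => dissat_le_of_subset A k (subset_insert c W) c'

end DissatisfactionLevel

section Winners

variable {C : Type*} [DecidableEq C] (w : ℕ → C)

theorem Wset_zero : Wset w 0 = ∅ := by simp [Wset]

theorem Wset_succ (j : ℕ) : Wset w (j + 1) = insert (w (j + 1)) (Wset w j) := by
  rw [Wset, ← insert_Icc_right_eq_Icc_add_one (Nat.le_add_left 1 j), image_insert, Wset]

theorem Wset_mono : Monotone (Wset w) :=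
  fun _ _ h => image_subset_image (Icc_subset_Icc_right h)

end Winners

theorem sub_div_le_sub_div_of_le {α : Type*} [Field α] [LinearOrder α] [IsStrictOrderedRing α]
    {a x y : α} (ha : 0 ≤ a) (hx : 0 < x) (hxy : x ≤ y) :
    (x - a) / x ≤ (y - a) / y := by
  rw [sub_div, sub_div, div_self hx.ne', div_self (hx.trans_le hxy).ne']
  exact sub_le_sub_left (div_le_div_of_nonneg_left ha hx hxy) 1

namespace Cohesive

variable {C : Type*} [Fintype C] [DecidableEq C] {n : ℕ} {A : Fin n → Finset C} {k ℓ : ℕ}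
  {Ns : Finset (Fin n)}

theorem mul_le_mul_card (h : Cohesive A k ℓ Ns) (hk : 0 < k) : ℓ * n ≤ k * #Ns := by
  have := (div_le_iff₀ (Nat.cast_pos.2 hk)).1 h.1
  rw [mul_comm (k : ℕ)]
  exact_mod_cast this

theorem exists_mem_commonApproved_notMem (h : Cohesive A k ℓ Ns) {W : Finset C} {i : Fin n}
    (hi : i ∈ Ns) (hiW : #(A i ∩ W) < ℓ) : ∃ c ∈ commonApproved A Ns, c ∉ W := by
  by_contra! hsub
  have : commonApproved A Ns ⊆ A i ∩ W := fun c hc =>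
    mem_inter.2 ⟨(mem_filter.1 hc).2 i hi, hsub c hc⟩
  exact (h.2.trans (card_le_card this)).not_gt hiW

end Cohesive

namespace PJRExactPartialRun

variable {C : Type*} [DecidableEq C] {n k r : ℕ} {A : Fin n → Finset C}
  (R : PJRExactPartialRun n k r A)

theorem f_nonneg_of_le {j : ℕ} (hj : j ≤ r) (i : Fin n) : 0 ≤ R.f j i := by
  rcases j with _ | j
  · simp [R.f_zero]
  · exact R.f_nonneg (j + 1) j.succ_pos hj i

theorem supp_le_sum_f {j : ℕ} (hj : j ≤ r) (c : C) : supp A (R.f j) c ≤ ∑ i, R.f j i :=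
  sum_le_sum_of_subset_of_nonneg (subset_univ _) fun i _ _ => R.f_nonneg_of_le hj i

theorem sum_sub_f_succ_eq_quota {j : ℕ} (hj : j + 1 ≤ r)
    (hq : quota n k ≤ supp A (R.f j) (R.w (j + 1))) :
    ∑ i ∈ approvers A (R.w (j + 1)), (R.f j i - R.f (j + 1) i) = quota n k := by
  rcases hq.lt_or_eq with hlt | heq
  · exact R.remove_big (j + 1) j.succ_pos hj hlt
  · rw [sum_sub_distrib, sum_eq_zero (s := approvers A (R.w (j + 1))) fun i hi =>
      R.remove_small (j + 1) j.succ_pos hj heq.ge i (mem_filter.1 hi).2, sub_zero]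
    exact heq.symm

theorem sum_f_succ {j : ℕ} (hj : j + 1 ≤ r) (hq : quota n k ≤ supp A (R.f j) (R.w (j + 1))) :
    ∑ i, R.f (j + 1) i = ∑ i, R.f j i - quota n k := by
  have hkept : ∑ i with R.w (j + 1) ∉ A i, R.f (j + 1) i = ∑ i with R.w (j + 1) ∉ A i, R.f j i :=
    sum_congr rfl fun i hi => R.f_untouched (j + 1) j.succ_pos hj i (mem_filter.1 hi).2
  have hremoved := R.sum_sub_f_succ_eq_quota hj hq
  rw [sum_sub_distrib, approvers] at hremoved
  rw [← sum_filter_add_sum_filter_not univ (R.w (j + 1) ∈ A ·),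
    ← sum_filter_add_sum_filter_not univ (R.w (j + 1) ∈ A ·) (R.f j), hkept]
  linarith

theorem sum_f_eq_sub_mul_quota
    (hq : ∀ j < r, quota n k ≤ supp A (R.f j) (R.w (j + 1))) :
    ∀ j ≤ r, ∑ i, R.f j i = n - j * quota n k
  | 0, _ => by simp [R.f_zero]
  | j + 1, hj => by
    rw [R.sum_f_succ hj (hq j hj), sum_f_eq_sub_mul_quota hq j (by omega)]
    push_cast
    ring

theorem sub_div_dissatVoterAll_le_f
    (hnormal : ∀ j : ℕ, 1 ≤ j → j ≤ r → NormalIterationP R j) :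
    ∀ j ≤ r, ∀ i, #(A i ∩ Wset R.w j) < dissatVoterAll A k (Wset R.w j) i →
      ((dissatVoterAll A k (Wset R.w j) i : ℚ) - #(A i ∩ Wset R.w j)) /
        dissatVoterAll A k (Wset R.w j) i ≤ R.f j i
  | 0, _, i, hi => by
    rw [Wset_zero] at hi ⊢
    simp only [inter_empty, card_empty, Nat.cast_zero, sub_zero] at hi ⊢
    rw [div_self (by exact_mod_cast hi.ne'), R.f_zero]
  | j + 1, hj, i, hi => by
    have hWj : Wset R.w j ⊆ Wset R.w (j + 1) := Wset_mono R.w j.le_succ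
    have hpos : (0 : ℚ) < dissatVoterAll A k (Wset R.w (j + 1)) i := by
      exact_mod_cast (Nat.zero_le _).trans_lt hi
    by_cases hw : R.w (j + 1) ∈ A i
    · have hL := Wset_succ R.w j ▸ dissatVoterAll_insert_le A k (Wset R.w j) i (R.w (j + 1))
      have ha : #(A i ∩ Wset R.w j) ≤ #(A i ∩ Wset R.w (j + 1)) :=
        card_le_card (inter_subset_inter_left hWj)
      have hnormal_i := (hnormal (j + 1) j.succ_pos hj).2 i hw
      rw [Nat.add_sub_cancel] at hnormal_i
      exact (sub_div_le_sub_div_of_le (Nat.cast_nonneg _) hpos (by exact_mod_cast hL)).trans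
        (hnormal_i (by omega))
    · have hL := dissatVoterAll_le_of_subset A k hWj i
      have hinter : A i ∩ Wset R.w (j + 1) = A i ∩ Wset R.w j := by
        rw [Wset_succ]
        exact inter_insert_of_notMem hw
      rw [hinter] at hi ⊢
      rw [R.f_untouched (j + 1) j.succ_pos hj i hw]
      exact (sub_div_le_sub_div_of_le (Nat.cast_nonneg _) hpos (by exact_mod_cast hL)).trans
        (sub_div_dissatVoterAll_le_f hnormal j (by omega) i (hi.trans_le hL))

theorem quota_le_supp_of_underrepresented (hn : 0 < n)
    (hnormal : ∀ j : ℕ, 1 ≤ j → j ≤ r → NormalIterationP R j) {j : ℕ} (hj : j ≤ r)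
    {Ns : Finset (Fin n)} {c : C} {ℓ : ℕ} (hℓ : 1 ≤ ℓ) (hsize : ℓ * n ≤ k * #Ns)
    (hc : c ∉ Wset R.w j) (happ : ∀ i ∈ Ns, c ∈ A i)
    (hunder : ∀ i ∈ Ns, #(A i ∩ Wset R.w j) < ℓ) :
    quota n k ≤ supp A (R.f j) c := by
  have hk : 0 < k := Nat.pos_of_mul_pos_right ((Nat.mul_pos hℓ hn).trans_le hsize)
  have hdissat : ℓ ≤ dissat A k (Wset R.w j) c :=
    le_dissat_of_le_dissatMap A k <| (Nat.le_div_iff_mul_le hn).2 <| hsize.trans <|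
      Nat.mul_le_mul_left _ <| card_le_card fun i hi =>
        mem_filter.2 ⟨mem_univ i, happ i hi, hunder i hi⟩
  have hvoter : ∀ i ∈ Ns, 1 / (ℓ : ℚ) ≤ R.f j i := by
    intro i hi
    have hL : ℓ ≤ dissatVoterAll A k (Wset R.w j) i :=
      hdissat.trans (le_sup (mem_sdiff.2 ⟨happ i hi, hc⟩))
    have ha : (#(A i ∩ Wset R.w j) : ℚ) + 1 ≤ ℓ := by exact_mod_cast hunder i hi
    calc 1 / (ℓ : ℚ) ≤ (ℓ - #(A i ∩ Wset R.w j)) / ℓ := by gcongr; linarith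
      _ ≤ _ := sub_div_le_sub_div_of_le (Nat.cast_nonneg _) (by exact_mod_cast hℓ)
          (by exact_mod_cast hL)
      _ ≤ R.f j i := R.sub_div_dissatVoterAll_le_f hnormal j hj i ((hunder i hi).trans_le hL)
  calc quota n k ≤ #Ns * (1 / (ℓ : ℚ)) := by
        rw [quota, mul_one_div, div_le_div_iff₀ (by exact_mod_cast hk) (by exact_mod_cast hℓ)]
        exact_mod_cast (mul_comm ℓ n).symm.trans_le (hsize.trans_eq (mul_comm k _))
    _ = ∑ i ∈ Ns, 1 / (ℓ : ℚ) := by rw [sum_const, nsmul_eq_mul]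
    _ ≤ ∑ i ∈ Ns, R.f j i := sum_le_sum hvoter
    _ ≤ supp A (R.f j) c := sum_le_sum_of_subset_of_nonneg
        (fun i hi => mem_filter.2 ⟨mem_univ i, happ i hi⟩) fun i _ _ => R.f_nonneg_of_le hj i

end PJRExactPartialRun

theorem ejrExact_satisfies_EJR_general {C : Type*} [Fintype C] [DecidableEq C] {n k r : ℕ}
    (hn : 0 < n)
    (A : Fin n → Finset C) (R : PJRExactPartialRun n k r A)
    (hnormal : ∀ j : ℕ, 1 ≤ j → j ≤ r → NormalIterationP R j)
    (hstop : r = k ∨ (r < k ∧ ∀ c : C, c ∉ Wset R.w r → supp A (R.f r) c < quota n k))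
    (W : Finset C) (hWr : Wset R.w r ⊆ W) :
    ProvidesEJR A k W := by
  intro ℓ hℓ hℓk Ns hcoh
  by_contra! hunder
  have hk : 0 < k := hℓ.trans hℓk
  have hsize := hcoh.mul_le_mul_card hk
  obtain ⟨i₀, hi₀⟩ : Ns.Nonempty :=
    card_pos.1 (Nat.pos_of_mul_pos_left ((Nat.mul_pos hℓ hn).trans_le hsize))
  obtain ⟨c, hcNs, hcW⟩ := hcoh.exists_mem_commonApproved_notMem hi₀ (hunder i₀ hi₀)
  have hcWj : ∀ j ≤ r, c ∉ Wset R.w j := fun j hj hc => hcW (hWr (Wset_mono R.w hj hc))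
  have hsupp : ∀ j ≤ r, quota n k ≤ supp A (R.f j) c := fun j hj =>
    R.quota_le_supp_of_underrepresented hn hnormal hj hℓ hsize (hcWj j hj)
      (mem_filter.1 hcNs).2 fun i hi =>
        (card_le_card (inter_subset_inter_left ((Wset_mono R.w hj).trans hWr))).trans_lt
          (hunder i hi)
  rcases hstop with rfl | ⟨-, hstop⟩
  · have hmass := R.sum_f_eq_sub_mul_quota
      (fun j hj => R.greedy (j + 1) j.succ_pos hj ⟨c, hcWj j hj.le, hsupp j hj.le⟩) r le_rfl
    have hq : (0 : ℚ) < quota n r := by unfold quota; positivity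
    have : quota n r ≤ 0 := calc
      quota n r ≤ ∑ i, R.f r i := (hsupp r le_rfl).trans (R.supp_le_sum_f le_rfl c)
      _ = 0 := by rw [hmass, quota]; field_simp; ring
    exact this.not_gt hq
  · exact (hstop c (hcWj r le_rfl)).not_ge (hsupp r le_rfl)

/-- if a partial PJR-Exact run of length `r` consists only of normal
iterations and either `r = k` or every remaining candidate is insufficiently supported,
then every size-`k` committee extending `W_r` provides EJR. In particular all voting
rules in the EJR-Exact family satisfy EJR. -/
theorem ejrExact_satisfies_EJR {C : Type*} [Fintype C] [DecidableEq C] {n k r : ℕ}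
    (hn : 0 < n) (hk : 1 ≤ k) (hkC : k ≤ Fintype.card C) (hr : r ≤ k)
    (A : Fin n → Finset C) (R : PJRExactPartialRun n k r A)
    (hnormal : ∀ j : ℕ, 1 ≤ j → j ≤ r → NormalIterationP R j)
    (hstop : r = k ∨ (r < k ∧ ∀ c : C, c ∉ Wset R.w r → supp A (R.f r) c < quota n k))
    (W : Finset C) (hWr : Wset R.w r ⊆ W) (hWcard : W.card = k) :
    ProvidesEJR A k W :=
  ejrExact_satisfies_EJR_general hn A R hnormal hstop W hWr
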